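/- arXiv:1711.07960 — 10 statements merged into one kernel-verified Lean document; each statement's English description precedes it below -/
import Mathlib

section
/- Let x ≥ 1 and β ≥ 2 be natural numbers, p ≥ 0 and ε > 0 and c ≥ 0 and t ≥ 0 real numbers, and set α = β^p. Suppose f : ℕ → ℝ is nonnegative, T : ℕ → ℝ satisfies T(x) = t and T(x·β^(k+1)) = α·T(x·β^k) + f(x·β^(k+1)) for every natural k, and f(x·β^k) ≤ c·β^(k·(p−ε))·t for every k ≥ 1. Then for every natural L, T(x·β^L) ≤ (1 + c/(β^ε − 1))·α^L·t. -/
/-!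
Unrolling the recurrence gives `T(x·β^L) = α^L·t + Σ_{k=1}^{L} α^(L-k)·f(x·β^k)`. The hypothesis on
`f` says `f(x·β^k) ≤ c·(α/β^ε)^k·t`, so the `k`-th term is at most `c·α^L·t·(β^(-ε))^k`, and the
geometric series `Σ_{k≥1} (β^(-ε))^k = 1/(β^ε - 1)` bounds their sum.
-/

open Finset

theorem le_pow_mul_of_recurrence_of_le_geometric {u g : ℕ → ℝ} {a r c t : ℝ} (ha : 0 ≤ a)
    (h0 : u 0 ≤ t) (hrec : ∀ k, u (k + 1) = a * u k + g (k + 1))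
    (hg : ∀ k, 1 ≤ k → g k ≤ c * (a * r) ^ k * t) (L : ℕ) :
    u L ≤ a ^ L * t * (1 + c * ∑ k ∈ Ico 1 (L + 1), r ^ k) := by
  induction L with
  | zero => simpa using h0
  | succ L ih =>
    calc u (L + 1) = a * u L + g (L + 1) := hrec L
      _ ≤ a * (a ^ L * t * (1 + c * ∑ k ∈ Ico 1 (L + 1), r ^ k)) + c * (a * r) ^ (L + 1) * t :=
          add_le_add (mul_le_mul_of_nonneg_left ih ha) (hg (L + 1) L.succ_pos)
      _ = a ^ (L + 1) * t * (1 + c * ∑ k ∈ Ico 1 (L + 1 + 1), r ^ k) := by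
          rw [sum_Ico_succ_top (show 1 ≤ L + 1 by omega) (r ^ ·)]
          ring

theorem geom_sum_Ico_one_inv_le {b : ℝ} (hb : 1 < b) (n : ℕ) :
    ∑ k ∈ Ico 1 n, b⁻¹ ^ k ≤ (b - 1)⁻¹ := by
  have hb0 : 0 < b := one_pos.trans hb
  calc ∑ k ∈ Ico 1 n, b⁻¹ ^ k ≤ b⁻¹ ^ 1 / (1 - b⁻¹) :=
        geom_sum_Ico_le_of_lt_one (inv_nonneg.mpr hb0.le) (inv_lt_one_of_one_lt₀ hb)
    _ = (b - 1)⁻¹ := by field_simp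

theorem Real.rpow_natCast_mul_sub {β : ℝ} (hβ : 0 < β) (k : ℕ) (p ε : ℝ) :
    β ^ ((k : ℝ) * (p - ε)) = (β ^ p * (β ^ ε)⁻¹) ^ k := by
  rw [mul_comm, Real.rpow_mul hβ.le, Real.rpow_natCast, Real.rpow_sub hβ, div_eq_mul_inv]

theorem stmt_1_general (x β : ℕ) (hβ : 2 ≤ β) (p ε c t : ℝ)
    (hε : 0 < ε) (hc : 0 ≤ c) (ht : 0 ≤ t)
    (α : ℝ) (hα : α = (β : ℝ) ^ p)
    (f T : ℕ → ℝ)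
    (hbase : T x = t)
    (hrec : ∀ k : ℕ, T (x * β ^ (k + 1)) = α * T (x * β ^ k) + f (x * β ^ (k + 1)))
    (hbound : ∀ k : ℕ, 1 ≤ k → f (x * β ^ k) ≤ c * (β : ℝ) ^ ((k : ℝ) * (p - ε)) * t) :
    ∀ L : ℕ, T (x * β ^ L) ≤ (1 + c / ((β : ℝ) ^ ε - 1)) * α ^ L * t := by
  intro L
  have hβ1 : (1 : ℝ) < β := by exact_mod_cast hβ
  have hβ0 : (0 : ℝ) < β := one_pos.trans hβ1
  have hα0 : 0 ≤ α := hα ▸ Real.rpow_nonneg hβ0.le p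
  have hleaves := le_pow_mul_of_recurrence_of_le_geometric (u := fun k ↦ T (x * β ^ k))
    (g := fun k ↦ f (x * β ^ k)) (r := ((β : ℝ) ^ ε)⁻¹) (t := t) hα0 (by simp [hbase]) hrec
    (fun k hk ↦ by simpa only [hα, Real.rpow_natCast_mul_sub hβ0] using hbound k hk) L
  have hgeom := geom_sum_Ico_one_inv_le (Real.one_lt_rpow hβ1 hε) (L + 1)
  calc T (x * β ^ L) ≤ α ^ L * t * (1 + c * ∑ k ∈ Ico 1 (L + 1), ((β : ℝ) ^ ε)⁻¹ ^ k) := hleaves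
    _ ≤ α ^ L * t * (1 + c * ((β : ℝ) ^ ε - 1)⁻¹) := by gcongr
    _ = (1 + c / ((β : ℝ) ^ ε - 1)) * α ^ L * t := by ring

theorem stmt_1 (x β : ℕ) (hx : 1 ≤ x) (hβ : 2 ≤ β) (p ε c t : ℝ)
    (hp : 0 ≤ p) (hε : 0 < ε) (hc : 0 ≤ c) (ht : 0 ≤ t)
    (α : ℝ) (hα : α = (β : ℝ) ^ p)
    (f T : ℕ → ℝ) (hf : ∀ n : ℕ, 0 ≤ f n)
    (hbase : T x = t)
    (hrec : ∀ k : ℕ, T (x * β ^ (k + 1)) = α * T (x * β ^ k) + f (x * β ^ (k + 1)))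
    (hbound : ∀ k : ℕ, 1 ≤ k → f (x * β ^ k) ≤ c * (β : ℝ) ^ ((k : ℝ) * (p - ε)) * t) :
    ∀ L : ℕ, T (x * β ^ L) ≤ (1 + c / ((β : ℝ) ^ ε - 1)) * α ^ L * t :=
  stmt_1_general x β hβ p ε c t hε hc ht α hα f T hbase hrec hbound
end

section
/- Let x ≥ 1 and β ≥ 2 be natural numbers, α ≥ 1 and t ≥ 0 real numbers, and 0 < c < 1 a real number. embedSuppose f : ℕ → ℝ is nonnegative, T : ℕ → ℝ satisfies T(x) = t and T(x·β^(k+1)) = α·T(x·β^k) + f(x·β^(k+1)) for every natural k, and the regularity condition α·f(x·β^k) ≤ c·f(x·β^(k+1)) holds for every natural k. Then for every natural L, T(x·β^L) ≤ α^L·t + f(x·β^L)/(1 − c). -/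
/-! Unrolling the recurrence, the cost added at level `k` is at most `c^(L-k)` times the cost
at level `L`, so the internal costs sum to a geometric series bounded by `f(x β^L) / (1 - c)`.
Inductively: `α · g L / (1 - c) ≤ c · g (L+1) / (1 - c)` by regularity, and
`c / (1 - c) + 1 = 1 / (1 - c)` absorbs the new term `g (L+1)`. -/

theorem le_pow_mul_add_div_one_sub_of_regular {α c : ℝ} (hα : 0 ≤ α) (hc : c < 1)
    {a g : ℕ → ℝ} (hg : 0 ≤ g 0) (hrec : ∀ k, a (k + 1) = α * a k + g (k + 1))
    (hreg : ∀ k, α * g k ≤ c * g (k + 1)) (L : ℕ) :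
    a L ≤ α ^ L * a 0 + g L / (1 - c) := by
  have hc' : 0 < 1 - c := sub_pos.mpr hc
  induction L with
  | zero => simpa using div_nonneg hg hc'.le
  | succ L ih =>
    have hroot : α * g L / (1 - c) ≤ c * g (L + 1) / (1 - c) :=
      div_le_div_of_nonneg_right (hreg L) hc'.le
    have hgeom : c * g (L + 1) / (1 - c) + g (L + 1) = g (L + 1) / (1 - c) := by
      field_simp
      ring
    calc a (L + 1) = α * a L + g (L + 1) := hrec L
      _ ≤ α * (α ^ L * a 0 + g L / (1 - c)) + g (L + 1) := by gcongr
      _ = α ^ (L + 1) * a 0 + α * g L / (1 - c) + g (L + 1) := by ring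
      _ ≤ α ^ (L + 1) * a 0 + g (L + 1) / (1 - c) := by linarith

theorem stmt_2_general (x β : ℕ) (α t c : ℝ)
    (hα : 1 ≤ α) (hc1 : c < 1)
    (f T : ℕ → ℝ) (hf : ∀ n : ℕ, 0 ≤ f n)
    (hbase : T x = t)
    (hrec : ∀ k : ℕ, T (x * β ^ (k + 1)) = α * T (x * β ^ k) + f (x * β ^ (k + 1)))
    (hreg : ∀ k : ℕ, α * f (x * β ^ k) ≤ c * f (x * β ^ (k + 1))) :
    ∀ L : ℕ, T (x * β ^ L) ≤ α ^ L * t + f (x * β ^ L) / (1 - c) := by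
  intro L
  have h := le_pow_mul_add_div_one_sub_of_regular (by linarith) hc1
    (a := fun k => T (x * β ^ k)) (g := fun k => f (x * β ^ k)) (hf _) hrec hreg L
  simpa [hbase] using h

theorem stmt_2 (x β : ℕ) (hx : 1 ≤ x) (hβ : 2 ≤ β) (α t c : ℝ)
    (hα : 1 ≤ α) (ht : 0 ≤ t) (hc0 : 0 < c) (hc1 : c < 1)
    (f T : ℕ → ℝ) (hf : ∀ n : ℕ, 0 ≤ f n)
    (hbase : T x = t)
    (hrec : ∀ k : ℕ, T (x * β ^ (k + 1)) = α * T (x * β ^ k) + f (x * β ^ (k + 1)))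
    (hreg : ∀ k : ℕ, α * f (x * β ^ k) ≤ c * f (x * β ^ (k + 1))) :
    ∀ L : ℕ, T (x * β ^ L) ≤ α ^ L * t + f (x * β ^ L) / (1 - c) :=
  stmt_2_general x β α t c hα hc1 f T hf hbase hrec hreg
end

section
/- Let x ≥ 1 and β ≥ 2 be natural numbers, α ≥ 1, t > 0, and c₁, c₂ > 0 real numbers. Suppose f : ℕ → ℝ, T : ℕ → ℝ satisfies T(x) = t and T(x·β^(k+1)) = α·T(x·β^k) + f(x·β^(k+1)) for every natural k, and c₁·α^k·t ≤ f(x·β^k) ≤ c₂·α^k·t for every k ≥ 1. Then for every natural L ≥ 1, α^L·t·(1 + c₁·L) ≤ T(x·β^L) ≤ α^L·t·(1 + c₂·L). -/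
/-!
Unrolling `u (k + 1) = α * u k + g (k + 1)` from `u 0 = t` gives
`u L = α ^ L * t + ∑_{k=1}^{L} α ^ (L - k) * g k`. If `c₁ * α ^ k * t ≤ g k ≤ c₂ * α ^ k * t`, each of
the `L` summands lies between `c₁ * α ^ L * t` and `c₂ * α ^ L * t`: every level of the recursion tree
costs the same, whence the bounds `α ^ L * t * (1 + cᵢ * L)`.
-/

section LinearRecurrence

variable {α t c : ℝ} {u g : ℕ → ℝ}

theorem le_of_linearRecurrence (hα : 0 ≤ α) (h0 : u 0 = t)
    (hrec : ∀ k, u (k + 1) = α * u k + g (k + 1))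
    (hg : ∀ k, 1 ≤ k → g k ≤ c * α ^ k * t) (L : ℕ) :
    u L ≤ α ^ L * t * (1 + c * L) := by
  induction L with
  | zero => simp [h0]
  | succ L ih =>
    calc u (L + 1) = α * u L + g (L + 1) := hrec L
      _ ≤ α * (α ^ L * t * (1 + c * L)) + c * α ^ (L + 1) * t := by
        gcongr
        exact hg (L + 1) L.succ_pos
      _ = α ^ (L + 1) * t * (1 + c * ↑(L + 1)) := by push_cast; ring

theorem ge_of_linearRecurrence (hα : 0 ≤ α) (h0 : u 0 = t)
    (hrec : ∀ k, u (k + 1) = α * u k + g (k + 1))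
    (hg : ∀ k, 1 ≤ k → c * α ^ k * t ≤ g k) (L : ℕ) :
    α ^ L * t * (1 + c * L) ≤ u L := by
  have h := le_of_linearRecurrence (u := -u) (g := -g) (t := -t) (c := c) hα (by simp [h0])
    (fun k => by simp only [Pi.neg_apply, hrec k]; ring) (fun k hk => by simpa using hg k hk) L
  simp only [Pi.neg_apply] at h
  linarith

end LinearRecurrence

theorem stmt_3_general (x β : ℕ) (α t c₁ c₂ : ℝ)
    (hα : 1 ≤ α)
    (f T : ℕ → ℝ)
    (hbase : T x = t)
    (hrec : ∀ k : ℕ, T (x * β ^ (k + 1)) = α * T (x * β ^ k) + f (x * β ^ (k + 1)))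
    (hbound : ∀ k : ℕ, 1 ≤ k →
      c₁ * α ^ k * t ≤ f (x * β ^ k) ∧ f (x * β ^ k) ≤ c₂ * α ^ k * t) :
    ∀ L : ℕ, 1 ≤ L →
      α ^ L * t * (1 + c₁ * L) ≤ T (x * β ^ L) ∧
        T (x * β ^ L) ≤ α ^ L * t * (1 + c₂ * L) := by
  intro L _
  have hα₀ : 0 ≤ α := zero_le_one.trans hα
  have h0 : T (x * β ^ 0) = t := by rwa [pow_zero, mul_one]
  exact ⟨ge_of_linearRecurrence (u := fun k => T (x * β ^ k)) (g := fun k => f (x * β ^ k))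
      hα₀ h0 hrec (fun k hk => (hbound k hk).1) L,
    le_of_linearRecurrence (u := fun k => T (x * β ^ k)) (g := fun k => f (x * β ^ k))
      hα₀ h0 hrec (fun k hk => (hbound k hk).2) L⟩

theorem stmt_3 (x β : ℕ) (hx : 1 ≤ x) (hβ : 2 ≤ β) (α t c₁ c₂ : ℝ)
    (hα : 1 ≤ α) (ht : 0 < t) (hc₁ : 0 < c₁) (hc₂ : 0 < c₂)
    (f T : ℕ → ℝ)
    (hbase : T x = t)
    (hrec : ∀ k : ℕ, T (x * β ^ (k + 1)) = α * T (x * β ^ k) + f (x * β ^ (k + 1)))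
    (hbound : ∀ k : ℕ, 1 ≤ k →
      c₁ * α ^ k * t ≤ f (x * β ^ k) ∧ f (x * β ^ k) ≤ c₂ * α ^ k * t) :
    ∀ L : ℕ, 1 ≤ L →
      α ^ L * t * (1 + c₁ * L) ≤ T (x * β ^ L) ∧
        T (x * β ^ L) ≤ α ^ L * t * (1 + c₂ * L) :=
  stmt_3_general x β α t c₁ c₂ hα f T hbase hrec hbound
end

section
/- Let x ≥ 1 and β ≥ 2 be natural numbers, α ≥ 1, γ > 0, and t ≥ 0 real numbers with α > γ. Suppose f : ℕ → ℝ is nonnegative, T : ℕ → ℝ satisfies T(x) = t and T(x·β^(k+1)) = α·T(x·β^k) + f(x·β^(k+1)) for every natural k, and γ·f(x·β^k) ≤ f(x·β^(k+1)) for every natural k. Then for every natural L ≥ 1, T(x·β^L) ≤ α^L·t + f(x·β^L)·(α/γ)^L/((α/γ) − 1). -/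
/-!
Unrolling the recurrence gives `T(x β^L) = α^L t + ∑_{1 ≤ j ≤ L} α^(L-j) f(x β^j)`, and growth by a
factor `γ` per level gives `α^(L-j) f(x β^j) ≤ (α/γ)^(L-j) f(x β^L)`. The cost of the internal
levels is therefore dominated by the top level times a geometric series of ratio `α/γ > 1`.
-/

open Finset

section GeometricBound

variable {K : Type*} [Field K] [LinearOrder K] [IsStrictOrderedRing K]

theorem geom_sum_le_pow_div_sub_one {r : K} (hr : 1 < r) (n : ℕ) :
    ∑ i ∈ range n, r ^ i ≤ r ^ n / (r - 1) := by
  rw [geom_sum_eq hr.ne']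
  exact div_le_div_of_nonneg_right (sub_le_self _ zero_le_one) (sub_pos.mpr hr).le

theorem le_pow_mul_add_mul_geom_sum {α r : K} {u g : ℕ → K} (hα : 0 ≤ α) (hr : 0 ≤ r)
    (hu : ∀ k, u (k + 1) = α * u k + g (k + 1)) (hg : ∀ k, α * g k ≤ r * g (k + 1)) (L : ℕ) :
    u L ≤ α ^ L * u 0 + g L * ∑ i ∈ range L, r ^ i := by
  induction L with
  | zero => simp
  | succ L ih =>
    have hS : 0 ≤ ∑ i ∈ range L, r ^ i := sum_nonneg fun i _ => pow_nonneg hr i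
    calc u (L + 1) = α * u L + g (L + 1) := hu L
      _ ≤ α * (α ^ L * u 0 + g L * ∑ i ∈ range L, r ^ i) + g (L + 1) := by gcongr
      _ = α ^ (L + 1) * u 0 + (α * g L) * ∑ i ∈ range L, r ^ i + g (L + 1) := by ring
      _ ≤ α ^ (L + 1) * u 0 + (r * g (L + 1)) * ∑ i ∈ range L, r ^ i + g (L + 1) := by
        linarith [mul_le_mul_of_nonneg_right (hg L) hS]
      _ = α ^ (L + 1) * u 0 + g (L + 1) * ∑ i ∈ range (L + 1), r ^ i := by
        rw [geom_sum_succ]; ring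

theorem le_pow_mul_add_mul_pow_div_sub_one {α r : K} {u g : ℕ → K} (hα : 0 ≤ α) (hr : 1 < r)
    (hu : ∀ k, u (k + 1) = α * u k + g (k + 1)) (hg : ∀ k, α * g k ≤ r * g (k + 1))
    (hg₀ : ∀ k, 0 ≤ g k) (L : ℕ) :
    u L ≤ α ^ L * u 0 + g L * r ^ L / (r - 1) := by
  calc u L ≤ α ^ L * u 0 + g L * ∑ i ∈ range L, r ^ i :=
        le_pow_mul_add_mul_geom_sum hα (zero_le_one.trans hr.le) hu hg L
    _ ≤ α ^ L * u 0 + g L * (r ^ L / (r - 1)) := by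
        gcongr
        · exact hg₀ L
        · exact geom_sum_le_pow_div_sub_one hr L
    _ = α ^ L * u 0 + g L * r ^ L / (r - 1) := by ring

end GeometricBound

theorem stmt_4_general (x β : ℕ) (α γ t : ℝ)
    (hγ : 0 < γ) (hαγ : γ < α)
    (f T : ℕ → ℝ) (hf : ∀ n : ℕ, 0 ≤ f n)
    (hbase : T x = t)
    (hrec : ∀ k : ℕ, T (x * β ^ (k + 1)) = α * T (x * β ^ k) + f (x * β ^ (k + 1)))
    (hgrow : ∀ k : ℕ, γ * f (x * β ^ k) ≤ f (x * β ^ (k + 1))) :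
    ∀ L : ℕ, 1 ≤ L →
      T (x * β ^ L) ≤ α ^ L * t + f (x * β ^ L) * (α / γ) ^ L / (α / γ - 1) := by
  intro L _
  have hα : 0 ≤ α := (hγ.trans hαγ).le
  have hratio : ∀ k, α * f (x * β ^ k) ≤ α / γ * f (x * β ^ (k + 1)) := fun k => by
    calc α * f (x * β ^ k) = α / γ * (γ * f (x * β ^ k)) := by field_simp
      _ ≤ α / γ * f (x * β ^ (k + 1)) := by gcongr; exact hgrow k
  have hbound := le_pow_mul_add_mul_pow_div_sub_one (u := fun k => T (x * β ^ k))
    hα ((one_lt_div hγ).mpr hαγ) hrec hratio (fun k => hf _) L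
  simpa [hbase] using hbound

theorem stmt_4 (x β : ℕ) (hx : 1 ≤ x) (hβ : 2 ≤ β) (α γ t : ℝ)
    (hα : 1 ≤ α) (hγ : 0 < γ) (ht : 0 ≤ t) (hαγ : γ < α)
    (f T : ℕ → ℝ) (hf : ∀ n : ℕ, 0 ≤ f n)
    (hbase : T x = t)
    (hrec : ∀ k : ℕ, T (x * β ^ (k + 1)) = α * T (x * β ^ k) + f (x * β ^ (k + 1)))
    (hgrow : ∀ k : ℕ, γ * f (x * β ^ k) ≤ f (x * β ^ (k + 1))) :
    ∀ L : ℕ, 1 ≤ L →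
      T (x * β ^ L) ≤ α ^ L * t + f (x * β ^ L) * (α / γ) ^ L / (α / γ - 1) :=
  stmt_4_general x β α γ t hγ hαγ f T hf hbase hrec hgrow
end

section
/- Let x ≥ 1 and β ≥ 2 be natural numbers, α ≥ 1, γ > 0, and t ≥ 0 real numbers with α < γ. Suppose f : ℕ → ℝ is nonnegative, T : ℕ → ℝ satisfies T(x) = t and T(x·β^(k+1)) = α·T(x·β^k) + f(x·β^(k+1)) for every natural k, and γ·f(x·β^k) ≤ f(x·β^(k+1)) for every natural k. Then for every natural L, T(x·β^L) ≤ α^L·t + f(x·β^L)/(1 − α/γ). -/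
/-! Unrolled, the recurrence gives `u L = α ^ L * u 0 + ∑ k ∈ Icc 1 L, α ^ (L - k) * g k`.
Since `g` grows by a factor `γ > α` per level, `α ^ (L - k) * g k ≤ (α / γ) ^ (L - k) * g L`, so the
sum is at most a geometric series of ratio `α / γ` times the root cost `g L`. -/

theorem le_pow_mul_add_div_one_sub_of_geometric_growth {α γ : ℝ} {u g : ℕ → ℝ}
    (hα : 0 ≤ α) (hαγ : α < γ) (hg₀ : 0 ≤ g 0)
    (hrec : ∀ k, u (k + 1) = α * u k + g (k + 1))
    (hgrow : ∀ k, γ * g k ≤ g (k + 1)) (L : ℕ) :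
    u L ≤ α ^ L * u 0 + g L / (1 - α / γ) := by
  have hγ : 0 < γ := hα.trans_lt hαγ
  set ρ := α / γ with hρ_def
  have hden : 0 < 1 - ρ := sub_pos.2 ((div_lt_one hγ).2 hαγ)
  have hshift : ∀ k, α * g k ≤ ρ * g (k + 1) := fun k =>
    calc α * g k = ρ * (γ * g k) := by rw [hρ_def]; field_simp
      _ ≤ ρ * g (k + 1) := mul_le_mul_of_nonneg_left (hgrow k) (div_nonneg hα hγ.le)
  induction L with
  | zero => simpa using div_nonneg hg₀ hden.le
  | succ L ih =>
    calc u (L + 1) = α * u L + g (L + 1) := hrec L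
      _ ≤ α * (α ^ L * u 0 + g L / (1 - ρ)) + g (L + 1) := by gcongr
      _ = α ^ (L + 1) * u 0 + α * g L / (1 - ρ) + g (L + 1) := by ring
      _ ≤ α ^ (L + 1) * u 0 + ρ * g (L + 1) / (1 - ρ) + g (L + 1) := by
        gcongr α ^ (L + 1) * u 0 + ?_ / (1 - ρ) + g (L + 1); exact hshift L
      _ = α ^ (L + 1) * u 0 + g (L + 1) / (1 - ρ) := by field_simp; ring

theorem stmt_5_general (x β : ℕ) (α γ t : ℝ)
    (hα : 1 ≤ α) (hαγ : α < γ)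
    (f T : ℕ → ℝ) (hf : ∀ n : ℕ, 0 ≤ f n)
    (hbase : T x = t)
    (hrec : ∀ k : ℕ, T (x * β ^ (k + 1)) = α * T (x * β ^ k) + f (x * β ^ (k + 1)))
    (hgrow : ∀ k : ℕ, γ * f (x * β ^ k) ≤ f (x * β ^ (k + 1))) :
    ∀ L : ℕ, T (x * β ^ L) ≤ α ^ L * t + f (x * β ^ L) / (1 - α / γ) := by
  intro L
  have h := le_pow_mul_add_div_one_sub_of_geometric_growth (u := fun k => T (x * β ^ k))
    (g := fun k => f (x * β ^ k)) (zero_le_one.trans hα) hαγ (hf _) hrec hgrow L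
  simpa only [pow_zero, mul_one, hbase] using h

theorem stmt_5 (x β : ℕ) (hx : 1 ≤ x) (hβ : 2 ≤ β) (α γ t : ℝ)
    (hα : 1 ≤ α) (hγ : 0 < γ) (ht : 0 ≤ t) (hαγ : α < γ)
    (f T : ℕ → ℝ) (hf : ∀ n : ℕ, 0 ≤ f n)
    (hbase : T x = t)
    (hrec : ∀ k : ℕ, T (x * β ^ (k + 1)) = α * T (x * β ^ k) + f (x * β ^ (k + 1)))
    (hgrow : ∀ k : ℕ, γ * f (x * β ^ k) ≤ f (x * β ^ (k + 1))) :
    ∀ L : ℕ, T (x * β ^ L) ≤ α ^ L * t + f (x * β ^ L) / (1 - α / γ) :=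
  stmt_5_general x β α γ t hα hαγ f T hf hbase hrec hgrow
end

section
/- Let G be a connected simple graph on a finite vertex type V, let X and T be finite types, and let ξ : X → V and τ : T → V be arbitrary maps. Define the simple graph G′ on V ⊕ X ⊕ T whose edges are: all edges of G between vertices of V; an edge between each x ∈ X and ξ(x); and an edge between each t ∈ T and τ(t) (no other edges). Define G_X on V ⊕ X and G_T on V ⊕ T analogously (attaching only the X-pendants, respectively only the T-pendants). For a finite simple graph H on vertex set U, write WI(H) = ∑_{u∈U} ∑_{v∈U} d_H(u,v), the sum of shortest-path distances over all ordered pairs. Then WI(G′) − WI(G_X) − WI(G_T) + WI(G) = 2·∑_{x∈X} ∑_{t∈T} (d_G(ξ(x), τ(t)) + 2). -/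
/-- The graph obtained from `G` by attaching, for every `w : W`, a pendant
vertex `w` joined by an edge to `f w`. -/
def SimpleGraph.addPendants {V W : Type*} (G : SimpleGraph V) (f : W → V) :
    SimpleGraph (V ⊕ W) :=
  SimpleGraph.fromRel (fun a b =>
    match a, b with
    | Sum.inl u, Sum.inl v => G.Adj u v
    | Sum.inl v, Sum.inr w => v = f w
    | _, _ => False)

/-- The Wiener index of a finite graph: the sum of the shortest-path
distances over all ordered pairs of vertices. -/
noncomputable def SimpleGraph.wienerIndex {U : Type*} [Fintype U] (H : SimpleGraph U) : ℕ :=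
  ∑ u : U, ∑ v : U, H.dist u v

/-!
In a graph with pendants attached, the distance between distinct vertices `a` and `b` is
`d_G(ρ a, ρ b) + δ a + δ b`, where `ρ` sends a pendant to its attachment vertex and `δ` is `1` on
pendants and `0` on `V`: this is a lower bound because it drops by at most one along each edge,
and a walk through `ρ a` and `ρ b` attains it. So the Wiener index splits into the `V`–`V`,
`V`–pendant and pendant–pendant blocks, and in the alternating sum every block cancels except the
`X`–`T` and `T`–`X` pendant pairs, each at distance `d_G(ξ x, τ t) + 2`.
-/

namespace SimpleGraph

variable {U V W : Type*}

lemma Walk.le_length_of_adj_le {H : SimpleGraph U} {d : U → U → ℕ} (hd : ∀ a, d a a = 0)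
    (hadj : ∀ {a b} c, H.Adj a b → d a c ≤ d b c + 1) {a b : U} (p : H.Walk a b) :
    d a b ≤ p.length := by
  induction p with
  | nil => simp [hd]
  | cons h _ ih => grw [hadj _ h, ih, length_cons]

lemma dist_eq_of_adj_le_of_walk {H : SimpleGraph U} {d : U → U → ℕ} (hd : ∀ a, d a a = 0)
    (hadj : ∀ {a b} c, H.Adj a b → d a c ≤ d b c + 1)
    (hwalk : ∀ a b, ∃ p : H.Walk a b, p.length = d a b) (a b : U) : H.dist a b = d a b := by
  obtain ⟨p, hp⟩ := hwalk a b
  obtain ⟨q, hq⟩ := Reachable.exists_walk_length_eq_dist ⟨p⟩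
  exact le_antisymm (hp ▸ dist_le p) (hq ▸ q.le_length_of_adj_le hd hadj)

variable {G : SimpleGraph V} {f : W → V}

@[simp] lemma addPendants_adj_inl_inl {u v : V} :
    (G.addPendants f).Adj (.inl u) (.inl v) ↔ G.Adj u v := by
  simp +contextual [addPendants, G.adj_comm, G.ne_of_adj]

@[simp] lemma addPendants_adj_inl_inr {v : V} {w : W} :
    (G.addPendants f).Adj (.inl v) (.inr w) ↔ v = f w := by
  simp [addPendants]

@[simp] lemma addPendants_adj_inr_inl {v : V} {w : W} :
    (G.addPendants f).Adj (.inr w) (.inl v) ↔ v = f w := by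
  simp [addPendants]

@[simp] lemma addPendants_not_adj_inr_inr {w w' : W} :
    ¬ (G.addPendants f).Adj (.inr w) (.inr w') := by
  simp [addPendants]

def pendantAnchor (f : W → V) : V ⊕ W → V := Sum.elim id f

def pendantDepth : V ⊕ W → ℕ := Sum.elim (fun _ ↦ 0) (fun _ ↦ 1)

lemma dist_pendantAnchor_add_depth_of_adj {a b : V ⊕ W} (h : (G.addPendants f).Adj a b) :
    G.dist (pendantAnchor f a) (pendantAnchor f b) + pendantDepth a + pendantDepth b = 1 := by
  rcases a with u | w <;> rcases b with v | w' <;>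
    simp_all [pendantAnchor, pendantDepth, dist_eq_one_iff_adj]

lemma exists_walk_to_pendantAnchor (a : V ⊕ W) :
    ∃ p : (G.addPendants f).Walk a (.inl (pendantAnchor f a)), p.length = pendantDepth a := by
  rcases a with u | w
  · exact ⟨.nil, rfl⟩
  · exact ⟨.cons (by simp [pendantAnchor]) .nil, rfl⟩

lemma dist_addPendants [DecidableEq V] [DecidableEq W] (hG : G.Connected) (a b : V ⊕ W) :
    (G.addPendants f).dist a b = if a = b then 0 else
      G.dist (pendantAnchor f a) (pendantAnchor f b) + pendantDepth a + pendantDepth b := by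
  apply dist_eq_of_adj_le_of_walk (d := fun a b ↦ if a = b then 0 else
    G.dist (pendantAnchor f a) (pendantAnchor f b) + pendantDepth a + pendantDepth b)
  · simp
  · intro a b c hab
    have hab1 := dist_pendantAnchor_add_depth_of_adj hab
    have htri := hG.dist_triangle (u := pendantAnchor f a) (v := pendantAnchor f b)
      (w := pendantAnchor f c)
    -- `hab1` bounds `d_G(ρ a, ρ b) + δ a` by `1 - δ b`; go through `ρ b` in `G`.
    split_ifs <;> subst_vars <;> omega
  · intro a b
    by_cases hab : a = b
    · subst hab
      exact ⟨.nil, by simp⟩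
    obtain ⟨p, hp⟩ := hG.exists_walk_length_eq_dist (pendantAnchor f a) (pendantAnchor f b)
    obtain ⟨qa, hqa⟩ := exists_walk_to_pendantAnchor (G := G) a
    obtain ⟨qb, hqb⟩ := exists_walk_to_pendantAnchor (G := G) b
    refine ⟨qa.append ((p.map ⟨Sum.inl, by simp⟩).append qb.reverse), ?_⟩
    simp [hab, hp, hqa, hqb]
    omega

lemma wienerIndex_addPendants [Fintype V] [Fintype W] [DecidableEq W] (hG : G.Connected) :
    (G.addPendants f).wienerIndex = G.wienerIndex + 2 * ∑ w, ∑ v, (G.dist (f w) v + 1)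
      + ∑ w, ∑ w', if w = w' then 0 else G.dist (f w) (f w') + 2 := by
  classical
  simp only [wienerIndex, Fintype.sum_sum_type, dist_addPendants hG, pendantAnchor, pendantDepth]
  simp only [Sum.elim_inl, Sum.elim_inr, id, Sum.inl.injEq, Sum.inr.injEq, reduceCtorEq,
    if_false, add_zero]
  have hVV (u v : V) : (if u = v then 0 else G.dist u v) = G.dist u v := by
    split_ifs with h <;> simp [h]
  have hVW : ∑ v, ∑ w, G.dist v (f w) = ∑ w, ∑ v, G.dist (f w) v := by
    rw [Finset.sum_comm]
    simp only [dist_comm]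
  simp only [hVV, Finset.sum_add_distrib, hVW, Finset.sum_const, Finset.card_univ, smul_eq_mul]
  ring

end SimpleGraph

theorem stmt_8 {V X T : Type*} [Fintype V] [Fintype X] [Fintype T]
    (G : SimpleGraph V) (hG : G.Connected) (ξ : X → V) (τ : T → V) :
    ((G.addPendants (Sum.elim ξ τ)).wienerIndex : ℤ)
        - (G.addPendants ξ).wienerIndex - (G.addPendants τ).wienerIndex
        + G.wienerIndex
      = 2 * ∑ x : X, ∑ t : T, ((G.dist (ξ x) (τ t) : ℤ) + 2) := by
  classical
  simp only [G.wienerIndex_addPendants hG, Fintype.sum_sum_type, Sum.elim_inl, Sum.elim_inr,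
    Sum.inl.injEq, Sum.inr.injEq, reduceCtorEq, if_false]
  have hTX : ∑ t, ∑ x, G.dist (τ t) (ξ x) = ∑ x, ∑ t, G.dist (ξ x) (τ t) := by
    rw [Finset.sum_comm]
    simp only [G.dist_comm]
  simp only [Finset.sum_add_distrib, hTX, Finset.sum_const, Finset.card_univ, smul_eq_mul]
  push_cast
  ring
end

section
/- Let G be a simple graph on a vertex type V and let k ≥ 1 be a natural number. Define the simple graph H on V × Fin (k+1) where (u,i) and (v,j) are adjacent if and only if |i − j| = 1 and (u = v or u and v are adjacent in G). Then for all u, v ∈ V, there exists a walk of length exactly k from (u,0) to (v,k) in H if and only if edist_G(u,v) ≤ k, where edist_G denotes the shortest-path distance of G in ℕ∞ (∞ for unreachable pairs). -/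
/-!
Every edge of the layered graph moves one layer and projects to a vertex of `G` or an edge of `G`,
so a walk of length `k` projects to a walk of length at most `k` in `G`. Conversely, a walk of
length at most `k` in `G` climbs through the layers one edge at a time and is then padded with
lazy steps `(v, i) – (v, i + 1)` until it reaches layer `k`.
-/

/-- The plain layered graph: `(u,i)` and `(v,j)` are adjacent iff the layers
`i` and `j` differ by exactly one and either `u = v` or `u` and `v` are
adjacent in `G`. -/
def plainLayeredGraph {V : Type*} (G : SimpleGraph V) (k : ℕ) :
    SimpleGraph (V × Fin (k + 1)) :=
  SimpleGraph.fromRel (fun a b =>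
    (b.2 : ℕ) = (a.2 : ℕ) + 1 ∧ (a.1 = b.1 ∨ G.Adj a.1 b.1))

namespace SimpleGraph

variable {V W : Type*} {G : SimpleGraph V} {G' : SimpleGraph W}

theorem edist_le_length_of_adj_imp_eq_or_adj {f : V → W}
    (hf : ∀ ⦃x y⦄, G.Adj x y → f x = f y ∨ G'.Adj (f x) (f y)) {x y : V} (w : G.Walk x y) :
    G'.edist (f x) (f y) ≤ w.length := by
  induction w with
  | nil => simp
  | @cons x y z h q ih =>
    have hstep : G'.edist (f x) (f y) ≤ 1 := edist_le_one_iff_adj_or_eq.mpr (hf h).symm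
    calc G'.edist (f x) (f z) ≤ G'.edist (f x) (f y) + G'.edist (f y) (f z) := G'.edist_triangle
      _ ≤ 1 + q.length := add_le_add hstep ih
      _ = (q.cons h).length := by rw [SimpleGraph.Walk.length_cons, Nat.cast_add, Nat.cast_one, add_comm]

end SimpleGraph

namespace plainLayeredGraph

open SimpleGraph

variable {V : Type*} {G : SimpleGraph V} {k : ℕ}

theorem adj_of_val_eq_succ {a b : V} {i j : Fin (k + 1)} (hij : (j : ℕ) = i + 1)
    (hab : a = b ∨ G.Adj a b) : (plainLayeredGraph G k).Adj (a, i) (b, j) := by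
  refine (fromRel_adj _ _ _).mpr ⟨fun h => ?_, Or.inl ⟨hij, hab⟩⟩
  have : i = j := congrArg Prod.snd h
  omega

theorem fst_eq_or_adj {x y : V × Fin (k + 1)} (h : (plainLayeredGraph G k).Adj x y) :
    x.1 = y.1 ∨ G.Adj x.1 y.1 := by
  rcases ((fromRel_adj _ _ _).mp h).2 with ⟨-, hxy⟩ | ⟨-, hyx | hyx⟩
  exacts [hxy, Or.inl hyx.symm, Or.inr hyx.symm]

theorem exists_walk_length_eq_of_length_le {a b : V} (p : G.Walk a b) (n : ℕ) (hp : p.length ≤ n)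
    (i j : Fin (k + 1)) (hij : (j : ℕ) = i + n) :
    ∃ w : (plainLayeredGraph G k).Walk (a, i) (b, j), w.length = n := by
  induction n generalizing a i with
  | zero =>
    obtain rfl : a = b := Walk.eq_of_length_eq_zero (Nat.le_zero.mp hp)
    obtain rfl : i = j := Fin.ext hij.symm
    exact ⟨.nil, rfl⟩
  | succ n ih =>
    let i' : Fin (k + 1) := ⟨i + 1, by omega⟩
    cases p with
    | nil =>
      obtain ⟨w, hw⟩ := ih .nil (Nat.zero_le n) i' (by simp only [i']; omega)
      exact ⟨.cons (adj_of_val_eq_succ rfl (Or.inl rfl)) w, by rw [Walk.length_cons, hw]⟩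
    | cons h q =>
      rw [Walk.length_cons] at hp
      obtain ⟨w, hw⟩ := ih q (by omega) i' (by simp only [i']; omega)
      exact ⟨.cons (adj_of_val_eq_succ rfl (Or.inr h)) w, by rw [Walk.length_cons, hw]⟩

end plainLayeredGraph

theorem stmt_10_general {V : Type*} (G : SimpleGraph V) (k : ℕ)
    (u v : V) :
    (∃ w : (plainLayeredGraph G k).Walk (u, 0) (v, Fin.last k),
        w.length = k) ↔ G.edist u v ≤ (k : ℕ∞) := by
  constructor
  · rintro ⟨w, hw⟩
    exact hw ▸ SimpleGraph.edist_le_length_of_adj_imp_eq_or_adj (f := Prod.fst)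
      (fun _ _ => plainLayeredGraph.fst_eq_or_adj) w
  · intro h
    obtain ⟨p, hp⟩ := SimpleGraph.exists_walk_of_edist_ne_top (ne_top_of_le_ne_top
      (ENat.natCast_ne_top k) h)
    exact plainLayeredGraph.exists_walk_length_eq_of_length_le p k
      (by exact_mod_cast hp.trans_le h) 0 (Fin.last k) (by simp)

theorem stmt_10 {V : Type*} (G : SimpleGraph V) (k : ℕ) (hk : 1 ≤ k)
    (u v : V) :
    (∃ w : (plainLayeredGraph G k).Walk (u, 0) (v, Fin.last k),
        w.length = k) ↔ G.edist u v ≤ (k : ℕ∞) :=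
  stmt_10_general G k u v
end

section
/- Let G be a simple graph on a vertex type V and let s, t ∈ V with s ≠ t and s and t not adjacent in G. Let G′ be the graph G with the edge {s,t} added. Then the minimum length of a cycle in G′ containing the edge {s,t} equals edist_G(s, t) + 1, where edist denotes shortest-path distance in ℕ∞ (∞ for unreachable pairs), the minimum cycle length is the infimum in ℕ∞ over lengths of cycles of G′ that contain the edge {s,t} (taking value ∞ if no such cycle exists), and ∞ + 1 = ∞. -/
/-!
Removing the edge `uv` from a cycle through it leaves a `u`–`v` walk avoiding `uv`, and a
shortest `u`–`v` path avoiding `uv` closes up with `uv` into a cycle. Hence the shortest cycle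
through `uv` is one longer than the distance from `u` to `v` in the graph without `uv`; for the
lower bound it suffices to split a trail through `uv` at `u` and `v` and keep the half that does
not contain `uv`. When `s` and `t` are not adjacent in `G`, deleting `st` from `G ⊔ edge s t`
gives back `G`.
-/

/-- The minimum length of a cycle of `G` whose edge set contains `e`,
as an infimum in `ℕ∞` (so `⊤` if no such cycle exists). -/
noncomputable def minCycleLengthThroughEdge {V : Type*} (G : SimpleGraph V)
    (e : Sym2 V) : ℕ∞ :=
  ⨅ (a : V) (w : G.Walk a a) (_ : w.IsCycle ∧ e ∈ w.edges), (w.length : ℕ∞)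

namespace SimpleGraph

variable {V : Type*} {G : SimpleGraph V} {a u v : V}

lemma sup_edge_deleteEdges_of_not_adj (h : ¬G.Adj u v) :
    (G ⊔ edge u v).deleteEdges {s(u, v)} = G := by
  rw [deleteEdges, ← edge, sup_sdiff_right_self, sdiff_edge _ h]

namespace Walk

lemma exists_walk_deleteEdges_length_lt_of_isTrail_append {p : G.Walk u v} {q : G.Walk v u}
    (h : (p.append q).IsTrail) (he : s(u, v) ∈ p.edges) :
    ∃ r : (G.deleteEdges {s(u, v)}).Walk u v, r.length < (p.append q).length := by
  have hq : s(u, v) ∉ q.edges := by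
    rw [isTrail_def, edges_append] at h
    exact List.disjoint_of_nodup_append h he
  have hp : 0 < p.length := by
    rw [← length_edges]; exact List.length_pos_of_mem he
  refine ⟨q.reverse.toDeleteEdge _ (by simpa using hq), ?_⟩
  simp only [length_transfer, length_reverse, length_append]
  omega

lemma IsTrail.exists_walk_deleteEdges_length_lt_of_start {c : G.Walk u u} (hc : c.IsTrail)
    (he : s(u, v) ∈ c.edges) :
    ∃ r : (G.deleteEdges {s(u, v)}).Walk u v, r.length < c.length := by
  classical
  have hv := c.snd_mem_support_of_mem_edges he
  rw [← c.take_spec hv] at hc he ⊢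
  rcases List.mem_append.1 ((edges_append _ _) ▸ he) with h | h
  · exact exists_walk_deleteEdges_length_lt_of_isTrail_append hc h
  · rw [← length_reverse, reverse_append]
    rw [← reverse_isTrail_iff, reverse_append] at hc
    exact exists_walk_deleteEdges_length_lt_of_isTrail_append hc (by simpa [Sym2.eq_swap] using h)

lemma IsTrail.exists_walk_deleteEdges_length_lt {c : G.Walk a a} (hc : c.IsTrail)
    (he : s(u, v) ∈ c.edges) :
    ∃ r : (G.deleteEdges {s(u, v)}).Walk u v, r.length < c.length := by
  classical
  have hu := c.fst_mem_support_of_mem_edges he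
  rw [← c.length_rotate u hu]
  exact (hc.rotate hu).exists_walk_deleteEdges_length_lt_of_start
    ((c.rotate_edges u hu).mem_iff.2 he)

end Walk

lemma edist_deleteEdges_add_one_le_minCycleLengthThroughEdge (u v : V) :
    (G.deleteEdges {s(u, v)}).edist u v + 1 ≤ minCycleLengthThroughEdge G s(u, v) := by
  refine le_iInf₂ fun a c ↦ le_iInf fun ⟨hc, he⟩ ↦ ?_
  obtain ⟨r, hr⟩ := hc.isTrail.exists_walk_deleteEdges_length_lt he
  calc (G.deleteEdges {s(u, v)}).edist u v + 1 ≤ r.length + 1 := by gcongr; exact r.edist_le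
    _ ≤ c.length := by exact_mod_cast hr

lemma minCycleLengthThroughEdge_le_edist_deleteEdges_add_one (h : G.Adj u v) :
    minCycleLengthThroughEdge G s(u, v) ≤ (G.deleteEdges {s(u, v)}).edist u v + 1 := by
  classical
  rcases eq_or_ne ((G.deleteEdges {s(u, v)}).edist u v) ⊤ with htop | htop
  · simp [htop]
  obtain ⟨p, hp⟩ := exists_walk_of_edist_ne_top htop
  let q : G.Walk v u := p.bypass.reverse.mapLe (deleteEdges_le _)
  have hq : s(u, v) ∉ q.edges := fun he ↦ by
    simpa using p.bypass.reverse.edges_subset_edgeSet (e := s(u, v)) (by simpa [q] using he)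
  have hcyc : (Walk.cons h q).IsCycle :=
    (Walk.cons_isCycle_iff _ _).2 ⟨p.bypass_isPath.reverse.mapLe _, hq⟩
  refine iInf₂_le_of_le u (.cons h q) (iInf_le_of_le ⟨hcyc, by simp⟩ ?_)
  rw [← hp, Walk.length_cons, Nat.cast_succ]
  gcongr
  simpa [q] using p.length_bypass_le_length

lemma minCycleLengthThroughEdge_eq_edist_deleteEdges_add_one (h : G.Adj u v) :
    minCycleLengthThroughEdge G s(u, v) = (G.deleteEdges {s(u, v)}).edist u v + 1 :=
  (minCycleLengthThroughEdge_le_edist_deleteEdges_add_one h).antisymm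
    (edist_deleteEdges_add_one_le_minCycleLengthThroughEdge u v)

end SimpleGraph

theorem stmt_13 {V : Type*} (G : SimpleGraph V) (s t : V) (hst : s ≠ t)
    (hadj : ¬ G.Adj s t) :
    minCycleLengthThroughEdge (G ⊔ SimpleGraph.fromEdgeSet {s(s, t)}) s(s, t)
      = G.edist s t + 1 := by
  rw [← SimpleGraph.edge]
  have hst' : (G ⊔ SimpleGraph.edge s t).Adj s t := by simp [SimpleGraph.edge_adj, hst]
  rw [SimpleGraph.minCycleLengthThroughEdge_eq_edist_deleteEdges_add_one hst',
    SimpleGraph.sup_edge_deleteEdges_of_not_adj hadj]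
end

section
/- Let G be a simple graph on a vertex type V and let s, t ∈ V with s ≠ t. Define the simple graph G′ on Option V by: some u and some v are adjacent in G′ iff u and v are adjacent in G, and none is adjacent to some u iff u = s or u = t. Then the minimum length of a cycle in G′ passing through the vertex none equals edist_G(s, t) + 2, where edist denotes shortest-path distance in ℕ∞ (∞ for unreachable pairs), the minimum cycle length is the infimum in ℕ∞ over lengths of cycles of G′ whose support contains the vertex none (taking value ∞ if no such cycle exists), and ∞ + 2 = ∞. -/
/-!
A cycle through the apex `none` leaves it along one of its two edges, to `s` say, returns along
the other one, from `t`, and in between avoids the apex, so it is a path of `G` from `s` to `t`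
plus two edges. Conversely a shortest `s`–`t` path of `G` closes up through the apex to such a
cycle, which is a genuine cycle because `s ≠ t`.
-/

open SimpleGraph SimpleGraph.Walk

/-- The minimum length of a cycle of `G` whose support contains the vertex
`v`, as an infimum in `ℕ∞` (so `⊤` if no such cycle exists). -/
noncomputable def minCycleLengthThroughVertex {V : Type*} (G : SimpleGraph V)
    (v : V) : ℕ∞ :=
  ⨅ (a : V) (w : G.Walk a a) (_ : w.IsCycle ∧ v ∈ w.support), (w.length : ℕ∞)

/-- `G` with one new vertex (`none`) adjacent exactly to `s` and `t`. -/
def addApexVertex {V : Type*} (G : SimpleGraph V) (s t : V) :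
    SimpleGraph (Option V) :=
  SimpleGraph.fromRel (fun a b =>
    match a, b with
    | some u, some v => G.Adj u v
    | none, some u => u = s ∨ u = t
    | _, _ => False)

section minCycleLengthThroughVertex

variable {V : Type*} {G : SimpleGraph V} {v : V}

lemma minCycleLengthThroughVertex_le {a : V} {c : G.Walk a a} (hc : c.IsCycle)
    (hv : v ∈ c.support) : minCycleLengthThroughVertex G v ≤ c.length :=
  iInf₂_le_of_le a c <| iInf_le_of_le ⟨hc, hv⟩ le_rfl

lemma le_minCycleLengthThroughVertex {n : ℕ∞}
    (h : ∀ c : G.Walk v v, c.IsCycle → n ≤ c.length) :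
    n ≤ minCycleLengthThroughVertex G v :=
  le_iInf₂ fun _ c => le_iInf fun ⟨hc, hv⟩ => by
    classical
    simpa using h (c.rotate v hv) (hc.rotate hv)

end minCycleLengthThroughVertex

section addApexVertex

variable {V : Type*} {G : SimpleGraph V} {s t : V}

@[simp]
lemma addApexVertex_adj_some_some {u v : V} :
    (addApexVertex G s t).Adj (some u) (some v) ↔ G.Adj u v := by
  simp only [addApexVertex, fromRel_adj, ne_eq, Option.some.injEq]
  exact ⟨fun ⟨_, h⟩ => h.elim id G.adj_symm, fun h => ⟨h.ne, .inl h⟩⟩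

@[simp]
lemma addApexVertex_adj_none_some {u : V} :
    (addApexVertex G s t).Adj none (some u) ↔ u = s ∨ u = t := by
  simp [addApexVertex]

@[simp]
lemma addApexVertex_adj_some_none {u : V} :
    (addApexVertex G s t).Adj (some u) none ↔ u = s ∨ u = t := by
  rw [adj_comm, addApexVertex_adj_none_some]

-- Reducible, so that `simp` and `rw` see `addApexVertexHom G s t u` as `some u`.
variable (G s t) in
abbrev addApexVertexHom : G →g addApexVertex G s t :=
  ⟨some, addApexVertex_adj_some_some.mpr⟩

lemma exists_eq_concat_map_of_isPath :
    ∀ {a : V} {p : (addApexVertex G s t).Walk (some a) none}, p.IsPath →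
      ∃ (b : V) (q : G.Walk a b) (h : (addApexVertex G s t).Adj (some b) none),
        p = (q.map (addApexVertexHom G s t)).concat h
  | a, .cons (v := none) h p, hp => by
    obtain rfl := (isPath_iff_nil.mp hp.of_cons).eq_nil
    exact ⟨a, .nil, h, rfl⟩
  | _, .cons (v := some _) h p, hp =>
    have ⟨b, q, h', e⟩ := exists_eq_concat_map_of_isPath hp.of_cons
    ⟨b, .cons (addApexVertex_adj_some_some.mp h) q, h', by rw [e]; rfl⟩

lemma edist_add_two_le_length_of_isCycle {c : (addApexVertex G s t).Walk none none}
    (hc : c.IsCycle) : G.edist s t + 2 ≤ c.length := by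
  cases c with
  | nil => exact absurd rfl hc.ne_nil
  | @cons _ y _ h p =>
    cases y with
    | none => simp at h
    | some a =>
      rw [cons_isCycle_iff] at hc
      obtain ⟨b, q, h', rfl⟩ := exists_eq_concat_map_of_isPath hc.1
      have ha : a = s ∨ a = t := addApexVertex_adj_none_some.mp h
      have hb : b = s ∨ b = t := addApexVertex_adj_some_none.mp h'
      -- otherwise the first and last edge of the cycle coincide
      have hab : a ≠ b := by
        rintro rfl
        exact hc.2 (by simp [edges_concat])
      have hq : G.edist s t ≤ q.length := by
        rcases ha with rfl | rfl <;> rcases hb with rfl | rfl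
        · exact absurd rfl hab
        · exact q.edist_le
        · exact edist_comm (G := G) ▸ q.edist_le
        · exact absurd rfl hab
      simpa [length_concat, add_assoc] using add_le_add_right hq 2

lemma minCycleLengthThroughVertex_addApexVertex_le (hst : s ≠ t) {p : G.Walk s t}
    (hp : p.IsPath) :
    minCycleLengthThroughVertex (addApexVertex G s t) none ≤ p.length + 2 := by
  have hs : (addApexVertex G s t).Adj none (some s) := by simp
  have ht : (addApexVertex G s t).Adj (some t) none := by simp
  have hnone : none ∉ (p.map (addApexVertexHom G s t)).support := by simp
  have hc : (cons hs ((p.map (addApexVertexHom G s t)).concat ht)).IsCycle := by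
    refine (cons_isCycle_iff _ hs).mpr ⟨(hp.map (Option.some_injective V)).concat hnone ht, ?_⟩
    rw [edges_concat, List.concat_eq_append, List.mem_append, List.mem_singleton]
    rintro (he | he)
    · exact hnone ((p.map _).fst_mem_support_of_mem_edges he)
    · simp [hst] at he
  simpa [length_concat, add_assoc] using minCycleLengthThroughVertex_le hc (start_mem_support _)

end addApexVertex

theorem stmt_14 {V : Type*} (G : SimpleGraph V) (s t : V) (hst : s ≠ t) :
    minCycleLengthThroughVertex (addApexVertex G s t) none
      = G.edist s t + 2 := by
  classical
  refine le_antisymm ?_ (le_minCycleLengthThroughVertex fun _ => edist_add_two_le_length_of_isCycle)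
  rcases eq_or_ne (G.edist s t) ⊤ with htop | htop
  · simp [htop]
  obtain ⟨p, hp⟩ := exists_walk_of_edist_ne_top htop
  calc minCycleLengthThroughVertex (addApexVertex G s t) none
      ≤ p.bypass.length + 2 := minCycleLengthThroughVertex_addApexVertex_le hst p.bypass_isPath
    _ ≤ p.length + 2 := by gcongr; exact p.length_bypass_le_length
    _ = G.edist s t + 2 := by rw [hp]
end

section
/- Let n ≥ 1 be a natural number, W a positive integer, and A : Fin n → ℤ with |A(i)| ≤ W for all i. Then the following are equivalent: (1) there exist i, j ∈ Fin n with (i : ℕ) + (j : ℕ) < n and A(i) + A(j) + A(i+j) = 0 (where i+j denotes the element of Fin n with value (i:ℕ)+(j:ℕ)); (2) there exist i, j, k ∈ Fin n with (10·W·i + A(i)) + (10·W·j + A(j)) + (−10·W·k + A(k)) = 0. -/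
/-! Since `10 * W` exceeds `|A i + A j + A k| ≤ 3 * W`, a zero sum of the encoded values splits
into its two scales: the index part `10 * W * (i + j - k)` and the value part
`A i + A j + A k` must vanish separately. -/

theorem Int.eq_zero_and_eq_zero_of_mul_add_eq_zero {m d e : ℤ} (h : m * d + e = 0)
    (he : |e| < m) : d = 0 ∧ e = 0 := by
  have he0 : e = 0 := Int.eq_zero_of_abs_lt_dvd ⟨-d, by linear_combination h⟩ he
  have hm : m ≠ 0 := ((abs_nonneg e).trans_lt he).ne'
  exact ⟨(mul_eq_zero.mp (by linear_combination h - he0)).resolve_left hm, he0⟩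

theorem abs_add_three_lt_ten_mul {a b c W : ℤ} (hW : 0 < W) (ha : |a| ≤ W) (hb : |b| ≤ W)
    (hc : |c| ≤ W) : |a + b + c| < 10 * W :=
  calc |a + b + c| ≤ |a| + |b| + |c| := abs_add_three a b c
    _ < 10 * W := by linarith

theorem stmt_17_general (n : ℕ) (W : ℤ) (hW : 0 < W) (A : Fin n → ℤ)
    (hA : ∀ i : Fin n, |A i| ≤ W) :
    (∃ i j : Fin n, ∃ h : (i : ℕ) + (j : ℕ) < n,
        A i + A j + A ⟨(i : ℕ) + (j : ℕ), h⟩ = 0) ↔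
    (∃ i j k : Fin n,
        (10 * W * ((i : ℕ) : ℤ) + A i) + (10 * W * ((j : ℕ) : ℤ) + A j)
          + (-(10 * W * ((k : ℕ) : ℤ)) + A k) = 0) := by
  constructor
  · rintro ⟨i, j, h, hsum⟩
    exact ⟨i, j, ⟨(i : ℕ) + (j : ℕ), h⟩, by push_cast; linear_combination hsum⟩
  · rintro ⟨i, j, k, hsum⟩
    obtain ⟨hidx, hval⟩ := Int.eq_zero_and_eq_zero_of_mul_add_eq_zero
      (d := (i : ℤ) + j - k) (by linear_combination hsum)
      (abs_add_three_lt_ten_mul hW (hA i) (hA j) (hA k))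
    have hk : (i : ℕ) + j = k := by omega
    refine ⟨i, j, hk ▸ k.isLt, ?_⟩
    rwa [show (⟨(i : ℕ) + j, hk ▸ k.isLt⟩ : Fin n) = k from Fin.ext hk]

theorem stmt_17 (n : ℕ) (hn : 1 ≤ n) (W : ℤ) (hW : 0 < W) (A : Fin n → ℤ)
    (hA : ∀ i : Fin n, |A i| ≤ W) :
    (∃ i j : Fin n, ∃ h : (i : ℕ) + (j : ℕ) < n,
        A i + A j + A ⟨(i : ℕ) + (j : ℕ), h⟩ = 0) ↔
    (∃ i j k : Fin n,
        (10 * W * ((i : ℕ) : ℤ) + A i) + (10 * W * ((j : ℕ) : ℤ) + A j)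
          + (-(10 * W * ((k : ℕ) : ℤ)) + A k) = 0) :=
  stmt_17_general n W hW A hA
end
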